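/- arXiv:2305.12220 — 4 statements merged into one kernel-verified Lean document; each statement's English description precedes it below -/
import Mathlib

section
/- Let r ∈ ℝ^n, let r̂ = HT_k(r), and let z ∈ ℝ^n satisfy ‖z‖₀ ≤ k. Then with I = supp(r̂) ∪ supp(z), it holds that ‖r̂_I − r_I‖₂ ≤ ‖z_I − r_I‖₂. -/
open Matrix

-- Largest eigenvalue of a symmetric real matrix (junk value `0` if not Hermitian).
open Classical in
noncomputable def lamMax {d : ℕ} (A : Matrix (Fin d) (Fin d) ℝ) : ℝ :=
  if h : A.IsHermitian then ⨆ i, h.eigenvalues i else 0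

-- Smallest eigenvalue of a symmetric real matrix (junk value `0` if not Hermitian).
open Classical in
noncomputable def lamMin {d : ℕ} (A : Matrix (Fin d) (Fin d) ℝ) : ℝ :=
  if h : A.IsHermitian then ⨅ i, h.eigenvalues i else 0

-- Euclidean norm of a vector.
noncomputable def norm2 {n : ℕ} (v : Fin n → ℝ) : ℝ := Real.sqrt (∑ i, v i ^ 2)

-- Support of a vector, as a `Finset`.
open Classical in
noncomputable def supp {n : ℕ} (v : Fin n → ℝ) : Finset (Fin n) :=
  Finset.univ.filter (fun i => v i ≠ 0)

-- `restrict S v` equals `v` on `S` and `0` outside `S`.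
open Classical in
noncomputable def restrict {n : ℕ} (S : Finset (Fin n)) (v : Fin n → ℝ) : Fin n → ℝ :=
  fun i => if i ∈ S then v i else 0

-- Hard thresholding: keep the `k` coordinates of largest absolute value
-- (ties broken by the fixed index ordering), zero out the rest.
open Classical in
noncomputable def HT {n : ℕ} (k : ℕ) (r : Fin n → ℝ) : Fin n → ℝ := fun i =>
  if (Finset.univ.filter (fun j => |r i| < |r j| ∨ (|r j| = |r i| ∧ j < i))).card < k
  then r i else 0

-- `gramOn X S = X_S * (X_S)ᵀ`, the Gram matrix of the columns of `X` indexed by `S`.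
def gramOn {d n : ℕ} (X : Matrix (Fin d) (Fin n) ℝ) (S : Finset (Fin n)) :
    Matrix (Fin d) (Fin d) ℝ :=
  fun a b => ∑ i ∈ S, X a i * X b i

section HTAuxSection

open Classical

namespace HTAux

variable {n : ℕ}

noncomputable def B (r : Fin n → ℝ) (i : Fin n) : Finset (Fin n) :=
  Finset.univ.filter (fun j => |r i| < |r j| ∨ (|r j| = |r i| ∧ j < i))

noncomputable def rk (r : Fin n → ℝ) (i : Fin n) : ℕ := (B r i).card

lemma mem_B {r : Fin n → ℝ} {i j : Fin n} :
    j ∈ B r i ↔ (|r i| < |r j| ∨ (|r j| = |r i| ∧ j < i)) := by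
  simp [B]

lemma not_mem_B_self (r : Fin n → ℝ) (i : Fin n) : i ∉ B r i := by
  simp [mem_B]

lemma B_subset {r : Fin n → ℝ} {i j : Fin n} (h : j ∈ B r i) : B r j ⊆ B r i := by
  intro l hl
  rw [mem_B] at h hl ⊢
  rcases h with h | ⟨h1, h2⟩ <;> rcases hl with hl | ⟨hl1, hl2⟩
  · exact Or.inl (h.trans hl)
  · exact Or.inl (hl1 ▸ h)
  · exact Or.inl (h1 ▸ hl)
  · exact Or.inr ⟨hl1.trans h1, hl2.trans h2⟩

lemma rk_lt {r : Fin n → ℝ} {i j : Fin n} (h : j ∈ B r i) : rk r j < rk r i :=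
  Finset.card_lt_card ⟨B_subset h, fun hs => not_mem_B_self r j (hs h)⟩

lemma total {r : Fin n → ℝ} {i j : Fin n} (hne : i ≠ j) : j ∈ B r i ∨ i ∈ B r j := by
  rcases lt_trichotomy |r i| |r j| with h | h | h
  · exact Or.inl (mem_B.mpr (Or.inl h))
  · rcases lt_or_gt_of_ne hne with hij | hij
    · exact Or.inr (mem_B.mpr (Or.inr ⟨h, hij⟩))
    · exact Or.inl (mem_B.mpr (Or.inr ⟨h.symm, hij⟩))
  · exact Or.inr (mem_B.mpr (Or.inl h))

lemma rk_injective (r : Fin n → ℝ) : Function.Injective (rk r) := by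
  intro i j h
  by_contra hne
  rcases total (r := r) hne with hb | hb
  · have := rk_lt hb; omega
  · have := rk_lt hb; omega

lemma rk_lt_n (r : Fin n → ℝ) (i : Fin n) : rk r i < n := by
  have h1 : B r i ⊆ Finset.univ.erase i :=
    fun j hj => Finset.mem_erase.mpr ⟨fun hji => not_mem_B_self r i (hji ▸ hj), Finset.mem_univ j⟩
  calc rk r i ≤ (Finset.univ.erase i).card := Finset.card_le_card h1
    _ < Finset.univ.card := Finset.card_erase_lt_of_mem (Finset.mem_univ i)
    _ = n := Finset.card_univ.trans (Fintype.card_fin n)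

lemma card_rk_lt (r : Fin n → ℝ) (k : ℕ) (hk : k ≤ n) :
    k ≤ (Finset.univ.filter (fun i => rk r i < k)).card := by
  set rk' : Fin n → Fin n := fun i => ⟨rk r i, rk_lt_n r i⟩ with hrk'
  have hinj : Function.Injective rk' := by
    intro i j h
    exact rk_injective r (congrArg Fin.val h)
  have hsurj : Function.Surjective rk' := Finite.surjective_of_injective hinj
  have := Finset.card_le_card_of_injOn
    (f := fun m : Fin k => Function.surjInv hsurj (Fin.castLE hk m))
    (s := Finset.univ) (t := Finset.univ.filter (fun i => rk r i < k))
    (fun m _ => by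
      simp only [Finset.coe_filter, Finset.mem_coe, Set.mem_setOf_eq, Finset.mem_filter, Finset.mem_univ, true_and]
      have : rk' (Function.surjInv hsurj (Fin.castLE hk m)) = Fin.castLE hk m :=
        Function.surjInv_eq hsurj _
      have h2 : rk r (Function.surjInv hsurj (Fin.castLE hk m)) = m :=
        congrArg Fin.val this
      have h3 : ((Fin.castLE hk m : Fin n) : ℕ) = (m : ℕ) := rfl
      omega)
    (fun a _ b _ hab => by
      have := congrArg rk' hab
      rw [Function.surjInv_eq hsurj, Function.surjInv_eq hsurj] at this
      exact Fin.castLE_injective hk this)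
  simpa using this

lemma sum_le_sum_of_card_le {s t : Finset (Fin n)} (f : Fin n → ℝ) (hf : ∀ i, 0 ≤ f i)
    (hcard : s.card ≤ t.card) (h : ∀ i ∈ s, ∀ j ∈ t, f i ≤ f j) :
    ∑ i ∈ s, f i ≤ ∑ j ∈ t, f j := by
  obtain ⟨t', ht', hct⟩ := Finset.exists_subset_card_eq hcard
  have e : (s : Type _) ≃ t' := Finset.equivOfCardEq hct.symm
  calc ∑ i ∈ s, f i = ∑ x : s, f x := (Finset.sum_attach s f).symm
    _ ≤ ∑ x : s, f (e x) := Finset.sum_le_sum (fun x _ =>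
        h x x.2 (e x) (ht' (e x).2))
    _ = ∑ y : t', f y := Equiv.sum_comp e (fun y : t' => f y)
    _ = ∑ y ∈ t', f y := Finset.sum_attach t' f
    _ ≤ ∑ j ∈ t, f j := Finset.sum_le_sum_of_subset_of_nonneg ht' (fun j _ _ => hf j)

end HTAux

end HTAuxSection

open HTAux

lemma HT_eq_rk {n : ℕ} (k : ℕ) (r : Fin n → ℝ) (i : Fin n) :
    HT k r i = if rk r i < k then r i else 0 := rfl

lemma supp_HT {n : ℕ} (k : ℕ) (r : Fin n → ℝ) :
    supp (HT k r) = Finset.univ.filter (fun i => rk r i < k ∧ r i ≠ 0) := by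
  ext i
  simp only [supp, Finset.mem_filter, Finset.mem_univ, true_and, HT_eq_rk]
  by_cases h : rk r i < k <;> simp [h]

theorem stmt3 {n : ℕ} (k : ℕ) (r z : Fin n → ℝ) (hz : (supp z).card ≤ k)
    (rhat : Fin n → ℝ) (hrhat : rhat = HT k r)
    (I : Finset (Fin n)) (hI : I = supp rhat ∪ supp z) :
    norm2 (restrict I rhat - restrict I r) ≤ norm2 (restrict I z - restrict I r) := by
  classical
  set S := supp rhat with hS
  have hmemS : ∀ i, i ∈ S ↔ (rk r i < k ∧ r i ≠ 0) := by
    intro i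
    rw [hS, hrhat, supp_HT]
    simp
  have hrhat_eq : ∀ i ∈ S, rhat i = r i := by
    intro i hi
    rw [hrhat, HT_eq_rk, if_pos ((hmemS i).mp hi).1]
  have hrhat_zero : ∀ i, i ∉ S → rhat i = 0 := by
    intro i hi
    by_contra h
    exact hi (by rw [hS]; simp [supp, h])
  -- reduce to sum inequality
  have hsum : ∀ v : Fin n → ℝ,
      ∑ i, ((restrict I v - restrict I r) i) ^ 2 = ∑ i ∈ I, (v i - r i) ^ 2 := by
    intro v
    rw [← Finset.sum_subset (Finset.subset_univ I)]
    · exact Finset.sum_congr rfl fun i hi => by simp [restrict, hi]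
    · intro i _ hi; simp [restrict, hi]
  unfold norm2
  apply Real.sqrt_le_sqrt
  rw [hsum, hsum]
  -- LHS computation
  have hIS : I \ S = supp z \ S := by
    ext i; simp only [hI, Finset.mem_sdiff, Finset.mem_union]; tauto
  have hIz : I \ supp z = S \ supp z := by
    ext i; simp only [hI, Finset.mem_sdiff, Finset.mem_union]; tauto
  have hL : ∑ i ∈ I, (rhat i - r i) ^ 2 = ∑ i ∈ supp z \ S, r i ^ 2 := by
    rw [← Finset.sum_subset (Finset.sdiff_subset : I \ S ⊆ I)
      (fun i hiI hiN => by
        have hiS : i ∈ S := by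
          by_contra h
          exact hiN (Finset.mem_sdiff.mpr ⟨hiI, h⟩)
        rw [hrhat_eq i hiS]; ring)]
    rw [hIS]
    refine Finset.sum_congr rfl fun i hi => ?_
    rw [hrhat_zero i (Finset.mem_sdiff.mp hi).2]
    ring
  rw [hL]
  -- RHS lower bound
  have hR : ∑ i ∈ S \ supp z, r i ^ 2 ≤ ∑ i ∈ I, (z i - r i) ^ 2 := by
    have h1 : ∑ i ∈ S \ supp z, r i ^ 2 = ∑ i ∈ I \ supp z, (z i - r i) ^ 2 := by
      rw [hIz]
      refine Finset.sum_congr rfl fun i hi => ?_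
      have : z i = 0 := by
        have := (Finset.mem_sdiff.mp hi).2
        by_contra h
        exact this (by simp [supp, h])
      rw [this]; ring
    rw [h1]
    exact Finset.sum_le_sum_of_subset_of_nonneg Finset.sdiff_subset
      (fun i _ _ => sq_nonneg _)
  refine le_trans ?_ hR
  -- middle: card comparison and term comparison
  set D' : Finset (Fin n) := (supp z \ S).filter (fun i => r i ≠ 0) with hD'
  have hDsum : ∑ i ∈ supp z \ S, r i ^ 2 = ∑ i ∈ D', r i ^ 2 := by
    rw [hD']
    exact (Finset.sum_filter_of_ne (fun i _ h => by
      intro h0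
      rw [h0] at h
      simp at h)).symm
  rw [hDsum]
  -- pairwise comparison
  have hpair : ∀ i ∈ D', ∀ j ∈ S \ supp z, r i ^ 2 ≤ r j ^ 2 := by
    intro i hi j hj
    have hiD := Finset.mem_filter.mp hi
    have hir : r i ≠ 0 := hiD.2
    have hiNS : i ∉ S := (Finset.mem_sdiff.mp hiD.1).2
    have hik : k ≤ rk r i := by
      by_contra h
      exact hiNS ((hmemS i).mpr ⟨by omega, hir⟩)
    have hjk : rk r j < k := ((hmemS j).mp (Finset.mem_sdiff.mp hj).1).1
    have habs : |r i| ≤ |r j| := by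
      by_contra h
      push_neg at h
      have : i ∈ B r j := mem_B.mpr (Or.inl h)
      have := rk_lt this
      omega
    calc r i ^ 2 = |r i| ^ 2 := (sq_abs _).symm
      _ ≤ |r j| ^ 2 := by
          have := abs_nonneg (r i)
          nlinarith
      _ = r j ^ 2 := sq_abs _
  -- card comparison
  have hcard : D'.card ≤ (S \ supp z).card := by
    by_cases hcase : k ≤ (supp r).card
    · have hkn : k ≤ n := le_trans hcase (by
        simpa using Finset.card_le_card (Finset.subset_univ (supp r)))
      have hsub : Finset.univ.filter (fun i => rk r i < k) ⊆ supp r := by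
        intro i hi
        have hik : rk r i < k := (Finset.mem_filter.mp hi).2
        by_contra h
        have hri : r i = 0 := by
          by_contra h'
          exact h (by simp [supp, h'])
        have : supp r ⊆ B r i := by
          intro j hj
          have hrj : r j ≠ 0 := by
            have := Finset.mem_filter.mp hj
            simpa using this.2
          exact mem_B.mpr (Or.inl (by rw [hri]; simpa using abs_pos.mpr hrj))
        have := Finset.card_le_card this
        have : (supp r).card ≤ rk r i := this
        omega
      have hSeq : S = Finset.univ.filter (fun i => rk r i < k) := by
        ext i
        rw [hmemS]
        simp only [Finset.mem_filter, Finset.mem_univ, true_and]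
        constructor
        · exact fun h => h.1
        · intro h
          refine ⟨h, ?_⟩
          have : i ∈ supp r := hsub (by simp [h])
          simpa [supp] using this
      have hkS : k ≤ S.card := by
        rw [hSeq]; exact card_rk_lt r k hkn
      have e1 : (supp z \ S).card + (supp z ∩ S).card = (supp z).card :=
        Finset.card_sdiff_add_card_inter _ _
      have e2 : (S \ supp z).card + (S ∩ supp z).card = S.card :=
        Finset.card_sdiff_add_card_inter _ _
      have e3 : (supp z ∩ S).card = (S ∩ supp z).card := by rw [Finset.inter_comm]
      have hD'le : D'.card ≤ (supp z \ S).card :=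
        Finset.card_le_card (Finset.filter_subset _ _)
      omega
    · have hD'empty : D' = ∅ := by
        rw [Finset.eq_empty_iff_forall_notMem]
        intro i hi
        have hiD := Finset.mem_filter.mp hi
        have hir : r i ≠ 0 := hiD.2
        have hiNS : i ∉ S := (Finset.mem_sdiff.mp hiD.1).2
        have hBsub : B r i ⊆ (supp r).erase i := by
          intro j hj
          refine Finset.mem_erase.mpr ⟨fun hji => not_mem_B_self r i (hji ▸ hj), ?_⟩
          have hrj : r j ≠ 0 := by
            rcases mem_B.mp hj with h | ⟨h, _⟩
            · intro h0
              rw [h0, abs_zero] at h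
              exact absurd h ((abs_nonneg _).not_gt)
            · intro h0
              apply hir
              rw [← abs_eq_zero, ← h, h0, abs_zero]
          simp [supp, hrj]
        have hmem : i ∈ supp r := by simp [supp, hir]
        have h1 : rk r i ≤ ((supp r).erase i).card := Finset.card_le_card hBsub
        have h2 : ((supp r).erase i).card < (supp r).card :=
          Finset.card_erase_lt_of_mem hmem
        have h3 : (supp r).card < k := not_le.mp hcase
        exact hiNS ((hmemS i).mpr ⟨by omega, hir⟩)
      simp [hD'empty]
  exact sum_le_sum_of_card_le _ (fun i => sq_nonneg _) hcard hpair
end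

section
/- Let b* ∈ ℝ^n with ‖b*‖₀ ≤ k, let ε ∈ ℝ^n, and set b̃ = HT_k(b* + ε). Then for every set I ⊆ {1,…,n} with supp(b̃) ⊆ I, there exists a set S ⊆ {1,…,n} with |S| ≤ |I ∖ supp(b̃)| such that ‖b̃_I − (b*_I + ε_I)‖₂ ≤ ‖ε_S‖₂. -/
open Matrix

section AuxStmt4

-- rank of index `i` in the tie-broken decreasing-|r| order (same filter as in `HT`)
open Classical in
noncomputable def rnk {n : ℕ} (r : Fin n → ℝ) (i : Fin n) : ℕ :=
  (Finset.univ.filter (fun j => |r i| < |r j| ∨ (|r j| = |r i| ∧ j < i))).card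

lemma HT_eq_rnk {n : ℕ} (k : ℕ) (r : Fin n → ℝ) (i : Fin n) :
    HT k r i = if rnk r i < k then r i else 0 := rfl

-- the strict order underlying `rnk`
def beats {n : ℕ} (r : Fin n → ℝ) (j i : Fin n) : Prop :=
  |r i| < |r j| ∨ (|r j| = |r i| ∧ j < i)

lemma beats_irrefl {n : ℕ} (r : Fin n → ℝ) (i : Fin n) : ¬ beats r i i := by
  rintro (h | ⟨_, h⟩) <;> exact absurd h (lt_irrefl _)

lemma beats_trans {n : ℕ} (r : Fin n → ℝ) {a b c : Fin n}
    (hab : beats r a b) (hbc : beats r b c) : beats r a c := by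
  rcases hab with h | ⟨h1, h2⟩ <;> rcases hbc with g | ⟨g1, g2⟩
  · exact Or.inl (by linarith)
  · exact Or.inl (by linarith)
  · exact Or.inl (by linarith)
  · exact Or.inr ⟨by linarith, lt_trans h2 g2⟩

lemma beats_total {n : ℕ} (r : Fin n → ℝ) {a b : Fin n} (hne : a ≠ b) :
    beats r a b ∨ beats r b a := by
  rcases lt_trichotomy (|r a|) (|r b|) with h | h | h
  · exact Or.inr (Or.inl h)
  · rcases lt_trichotomy a b with g | g | g
    · exact Or.inl (Or.inr ⟨h, g⟩)
    · exact absurd g hne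
    · exact Or.inr (Or.inr ⟨h.symm, g⟩)
  · exact Or.inl (Or.inl h)

open Classical in
lemma rnk_eq_card {n : ℕ} (r : Fin n → ℝ) (i : Fin n) :
    rnk r i = (Finset.univ.filter (fun j => beats r j i)).card := by
  unfold rnk beats
  congr 1
  ext j
  simp only [Finset.mem_filter]

lemma rnk_lt_rnk {n : ℕ} (r : Fin n → ℝ) {a b : Fin n} (h : beats r a b) :
    rnk r a < rnk r b := by
  classical
  rw [rnk_eq_card, rnk_eq_card]
  apply Finset.card_lt_card
  constructor
  · intro j hj
    rw [Finset.mem_filter] at hj ⊢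
    exact ⟨hj.1, beats_trans r hj.2 h⟩
  · intro hsub
    have ha : a ∈ Finset.univ.filter (fun j => beats r j b) := by
      rw [Finset.mem_filter]; exact ⟨Finset.mem_univ _, h⟩
    have := hsub ha
    rw [Finset.mem_filter] at this
    exact beats_irrefl r a this.2

lemma rnk_injective {n : ℕ} (r : Fin n → ℝ) : Function.Injective (rnk r) := by
  intro a b hab
  by_contra hne
  rcases beats_total r hne with h | h
  · exact absurd hab (Nat.ne_of_lt (rnk_lt_rnk r h))
  · exact absurd hab.symm (Nat.ne_of_lt (rnk_lt_rnk r h))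

lemma beats_of_rnk_lt {n : ℕ} (r : Fin n → ℝ) {a b : Fin n} (h : rnk r a < rnk r b) :
    beats r a b := by
  by_contra hn
  have hne : a ≠ b := fun he => by subst he; exact lt_irrefl _ h
  rcases beats_total r hne with g | g
  · exact hn g
  · exact absurd h (not_lt_of_gt (rnk_lt_rnk r g))

lemma abs_le_of_rnk_lt {n : ℕ} (r : Fin n → ℝ) {a b : Fin n} (h : rnk r a < rnk r b) :
    |r b| ≤ |r a| := by
  rcases beats_of_rnk_lt r h with g | ⟨g, _⟩
  · exact le_of_lt g
  · exact g.ge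

lemma rnk_lt_n {n : ℕ} (r : Fin n → ℝ) (i : Fin n) : rnk r i < n := by
  classical
  rw [rnk_eq_card]
  have hsub : Finset.univ.filter (fun j => beats r j i) ⊆ Finset.univ.erase i := by
    intro j hj
    rw [Finset.mem_filter] at hj
    refine Finset.mem_erase.2 ⟨?_, Finset.mem_univ _⟩
    intro he; subst he; exact beats_irrefl r j hj.2
  calc (Finset.univ.filter (fun j => beats r j i)).card
      ≤ (Finset.univ.erase i).card := Finset.card_le_card hsub
    _ < Finset.univ.card := Finset.card_erase_lt_of_mem (Finset.mem_univ i)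
    _ = n := by simp

lemma sum_restrict_sq {n : ℕ} (S : Finset (Fin n)) (v : Fin n → ℝ) :
    ∑ i, restrict S v i ^ 2 = ∑ i ∈ S, v i ^ 2 := by
  classical
  rw [← Finset.sum_subset (Finset.subset_univ S)]
  · exact Finset.sum_congr rfl fun i hi => by simp [restrict, hi]
  · intro i _ hi; simp [restrict, hi]

end AuxStmt4

theorem stmt4 {n : ℕ} (k : ℕ) (bstar ε : Fin n → ℝ) (hbstar : (supp bstar).card ≤ k)
    (btil : Fin n → ℝ) (hbtil : btil = HT k (bstar + ε)) :
    ∀ I : Finset (Fin n), supp btil ⊆ I →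
      ∃ S : Finset (Fin n), S.card ≤ (I \ supp btil).card ∧
        norm2 (restrict I btil - (restrict I bstar + restrict I ε)) ≤ norm2 (restrict S ε) := by
  classical
  intro I hI
  set r : Fin n → ℝ := bstar + ε with hrdef
  have hb : ∀ i, btil i = if rnk r i < k then r i else 0 := by
    intro i; rw [hbtil]; exact HT_eq_rnk k r i
  set A : Finset (Fin n) := supp bstar with hA
  set K : Finset (Fin n) := Finset.univ.filter (fun i => rnk r i < k) with hK
  set D : Finset (Fin n) := I.filter (fun i => ¬ rnk r i < k ∧ r i ≠ 0) with hD
  set D1 : Finset (Fin n) := D.filter (fun i => i ∈ A) with hD1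
  set D2 : Finset (Fin n) := D.filter (fun i => i ∉ A) with hD2
  -- basic support facts
  have hsupp : ∀ (v : Fin n → ℝ) (i : Fin n), i ∈ supp v ↔ v i ≠ 0 := by
    intro v i; simp [supp]
  -- cardinality of K
  have himg : Finset.univ.image (rnk r) = Finset.range n := by
    apply Finset.eq_of_subset_of_card_le
    · intro m hm
      rw [Finset.mem_image] at hm
      obtain ⟨i, _, hi⟩ := hm
      rw [Finset.mem_range, ← hi]
      exact rnk_lt_n r i
    · rw [Finset.card_range, Finset.card_image_of_injective _ (rnk_injective r)]
      simp
  have hKcard : K.card = min k n := by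
    have h1 : K.image (rnk r) = (Finset.univ.image (rnk r)).filter (fun m => m < k) := by
      rw [Finset.filter_image]
    have h2 : (Finset.range n).filter (fun m => m < k) = Finset.range (min k n) := by
      ext m; simp only [Finset.mem_filter, Finset.mem_range, lt_min_iff]; omega
    have := congrArg Finset.card h1
    rwa [Finset.card_image_of_injective _ (rnk_injective r), himg, h2,
      Finset.card_range] at this
  -- |A \ K| ≤ |K \ A|
  have hAK : (A \ K).card ≤ (K \ A).card := by
    rcases Finset.eq_empty_or_nonempty (A \ K) with he | ⟨i, hi⟩
    · simp [he]
    · rw [Finset.mem_sdiff, hK, Finset.mem_filter] at hi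
      have hk_le : k ≤ rnk r i := not_lt.1 (fun h => hi.2 ⟨Finset.mem_univ _, h⟩)
      have hkn : k < n := lt_of_le_of_lt hk_le (rnk_lt_n r i)
      have hKk : K.card = k := by rw [hKcard]; omega
      have e1 := Finset.card_sdiff_add_card_inter K A
      have e2 := Finset.card_sdiff_add_card_inter A K
      rw [Finset.inter_comm] at e2
      omega
  have hD1card : D1.card ≤ (K \ A).card := by
    refine le_trans (Finset.card_le_card ?_) hAK
    intro i hi
    rw [hD1, Finset.mem_filter] at hi
    rw [Finset.mem_sdiff]
    refine ⟨hi.2, ?_⟩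
    rw [hK, Finset.mem_filter]
    rw [hD, Finset.mem_filter] at hi
    exact fun h => hi.1.2.1 h.2
  obtain ⟨T, hTsub, hTcard⟩ := Finset.exists_subset_card_eq hD1card
  -- the chosen set
  refine ⟨D2 ∪ T, ?_, ?_⟩
  · -- cardinality bound
    have hDsub : D ⊆ I \ supp btil := by
      intro i hi
      rw [hD, Finset.mem_filter] at hi
      rw [Finset.mem_sdiff]
      refine ⟨hi.1, ?_⟩
      rw [hsupp]
      push_neg
      rw [hb i, if_neg hi.2.1]
    have hsplit : D1.card + D2.card = D.card := Finset.card_filter_add_card_filter_not _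
    calc (D2 ∪ T).card ≤ D2.card + T.card := Finset.card_union_le _ _
      _ = D2.card + D1.card := by rw [hTcard]
      _ = D.card := by omega
      _ ≤ (I \ supp btil).card := Finset.card_le_card hDsub
  · -- norm bound
    have hdisj : Disjoint D2 T := by
      rw [Finset.disjoint_left]
      intro i hi hiT
      have h1 := hTsub hiT
      rw [Finset.mem_sdiff, hK, Finset.mem_filter] at h1
      rw [hD2, Finset.mem_filter, hD, Finset.mem_filter] at hi
      exact hi.1.2.1 h1.1.2
    -- pointwise description of the LHS vector
    have hg : ∀ i, (restrict I btil - (restrict I bstar + restrict I ε)) i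
        = if i ∈ I then btil i - r i else 0 := by
      intro i
      simp only [Pi.sub_apply, Pi.add_apply, restrict, hrdef]
      split <;> simp
    -- LHS sum
    have hLHS : ∑ i, (restrict I btil - (restrict I bstar + restrict I ε)) i ^ 2
        = ∑ i ∈ D, r i ^ 2 := by
      rw [← Finset.sum_subset (Finset.subset_univ D)]
      · refine Finset.sum_congr rfl fun i hi => ?_
        rw [hD, Finset.mem_filter] at hi
        rw [hg i, if_pos hi.1, hb i, if_neg hi.2.1]
        ring
      · intro i _ hi
        rw [hD, Finset.mem_filter] at hi
        rw [hg i]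
        split
        · rename_i hiI
          rcases not_and_or.1 (fun h => hi ⟨hiI, h⟩) with h | h
          · rw [hb i, if_pos (not_not.1 h)]; ring
          · rw [not_not.1 h, hb i]
            split <;> simp [not_not.1 h]
        · simp
    -- D2 part: bstar vanishes there
    have hD2sum : ∑ i ∈ D2, r i ^ 2 = ∑ i ∈ D2, ε i ^ 2 := by
      refine Finset.sum_congr rfl fun i hi => ?_
      rw [hD2, Finset.mem_filter] at hi
      have h0 : bstar i = 0 := by
        by_contra h
        exact hi.2 ((hsupp bstar i).2 h)
      rw [hrdef]; simp [h0]
    -- D1 part: compare with T via a bijection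
    have hTD1 : Fintype.card T = Fintype.card D1 := by
      rw [Fintype.card_coe, Fintype.card_coe, hTcard]
    let e : D1 ≃ T := (Fintype.equivOfCardEq hTD1).symm
    have hD1sum : ∑ i ∈ D1, r i ^ 2 ≤ ∑ j ∈ T, ε j ^ 2 := by
      rw [← Finset.sum_coe_sort D1 (fun i => r i ^ 2),
          ← Finset.sum_coe_sort T (fun j => ε j ^ 2),
          ← Equiv.sum_comp e (fun j : T => ε (j : Fin n) ^ 2)]
      refine Finset.sum_le_sum fun x _ => ?_
      have hx : (x : Fin n) ∈ D ∧ (x : Fin n) ∈ A := Finset.mem_filter.1 x.2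
      have hxD : ¬ rnk r (x : Fin n) < k ∧ r (x : Fin n) ≠ 0 :=
        (Finset.mem_filter.1 hx.1).2
      have hex : (e x : Fin n) ∈ T := (e x).2
      have hexKA := Finset.mem_sdiff.1 (hTsub hex)
      have hexK : rnk r (e x : Fin n) < k := (Finset.mem_filter.1 hexKA.1).2
      have hlt : rnk r (e x : Fin n) < rnk r (x : Fin n) :=
        lt_of_lt_of_le hexK (not_lt.1 hxD.1)
      have habs : |r (x : Fin n)| ≤ |r (e x : Fin n)| := abs_le_of_rnk_lt r hlt
      have h0 : bstar (e x : Fin n) = 0 := by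
        by_contra h
        exact hexKA.2 ((hsupp bstar _).2 h)
      have hre : r (e x : Fin n) = ε (e x : Fin n) := by rw [hrdef]; simp [h0]
      calc r (x : Fin n) ^ 2 = |r (x : Fin n)| ^ 2 := (sq_abs _).symm
        _ ≤ |r (e x : Fin n)| ^ 2 := by
            exact pow_le_pow_left₀ (abs_nonneg _) habs 2
        _ = ε (e x : Fin n) ^ 2 := by rw [sq_abs, hre]
    -- put it together
    have hDsplit : ∑ i ∈ D1, r i ^ 2 + ∑ i ∈ D2, r i ^ 2 = ∑ i ∈ D, r i ^ 2 :=
      Finset.sum_filter_add_sum_filter_not D _ _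
    have hsum : ∑ i, (restrict I btil - (restrict I bstar + restrict I ε)) i ^ 2
        ≤ ∑ i, restrict (D2 ∪ T) ε i ^ 2 := by
      rw [hLHS, sum_restrict_sq, Finset.sum_union hdisj, ← hDsplit, hD2sum]
      have := hD1sum
      linarith
    exact Real.sqrt_le_sqrt hsum
end

section
/- Let X ∈ ℝ^{d×n} with XX^T positive definite, let y = X^T w* + b* + ε for w* ∈ ℝ^d and b*, ε ∈ ℝ^n, let b ∈ ℝ^n, and set w' = (XX^T)^{-1} X (y − b). Then for every b̃ ∈ ℝ^n, ‖w' − w*‖₂ ≤ (1/λ_min(XX^T))·‖X(ε + b* − b̃)‖₂ + (√(λ_max(XX^T))/λ_min(XX^T))·‖b̃ − b‖₂. -/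
open Matrix

lemma dot_nonneg' {n : ℕ} (v : Fin n → ℝ) : 0 ≤ v ⬝ᵥ v :=
  Finset.sum_nonneg fun i _ => mul_self_nonneg _

lemma norm2_eq' {n : ℕ} (v : Fin n → ℝ) : norm2 v = Real.sqrt (v ⬝ᵥ v) := by
  unfold norm2 dotProduct
  congr 1; exact Finset.sum_congr rfl fun i _ => (sq (v i)).symm ▸ rfl

lemma norm2_nonneg' {n : ℕ} (v : Fin n → ℝ) : 0 ≤ norm2 v := Real.sqrt_nonneg _

lemma sq_norm2' {n : ℕ} (v : Fin n → ℝ) : norm2 v ^ 2 = v ⬝ᵥ v := by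
  rw [norm2_eq', Real.sq_sqrt (dot_nonneg' v)]

lemma cs' {n : ℕ} (v w : Fin n → ℝ) : v ⬝ᵥ w ≤ norm2 v * norm2 w := by
  have h := Finset.sum_mul_sq_le_sq_mul_sq Finset.univ v w
  have h2 : (v ⬝ᵥ w) ^ 2 ≤ (v ⬝ᵥ v) * (w ⬝ᵥ w) := by
    simpa [dotProduct, sq] using h
  calc v ⬝ᵥ w ≤ |v ⬝ᵥ w| := le_abs_self _
    _ = Real.sqrt ((v ⬝ᵥ w) ^ 2) := (Real.sqrt_sq_eq_abs _).symm
    _ ≤ Real.sqrt ((v ⬝ᵥ v) * (w ⬝ᵥ w)) := Real.sqrt_le_sqrt h2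
    _ = norm2 v * norm2 w := by
        rw [Real.sqrt_mul (dot_nonneg' v), norm2_eq', norm2_eq']

lemma norm2_triangle {n : ℕ} (v w : Fin n → ℝ) : norm2 (v + w) ≤ norm2 v + norm2 w := by
  rw [norm2_eq']
  have hd : (v + w) ⬝ᵥ (v + w) ≤ (norm2 v + norm2 w) ^ 2 := by
    have h1 : (v + w) ⬝ᵥ (v + w) = v ⬝ᵥ v + 2 * (v ⬝ᵥ w) + w ⬝ᵥ w := by
      simp [add_dotProduct, dotProduct_add, dotProduct_comm w v]; ring
    have h2 := cs' v w
    nlinarith [sq_norm2' v, sq_norm2' w]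
  calc Real.sqrt ((v + w) ⬝ᵥ (v + w)) ≤ Real.sqrt ((norm2 v + norm2 w) ^ 2) :=
        Real.sqrt_le_sqrt hd
    _ = norm2 v + norm2 w := by
        rw [Real.sqrt_sq (add_nonneg (norm2_nonneg' v) (norm2_nonneg' w))]

lemma rayleigh' {d : ℕ} (A : Matrix (Fin d) (Fin d) ℝ) (hA : A.IsHermitian) (v : Fin d → ℝ) :
    lamMin A * (v ⬝ᵥ v) ≤ v ⬝ᵥ A *ᵥ v ∧ v ⬝ᵥ A *ᵥ v ≤ lamMax A * (v ⬝ᵥ v) := by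
  classical
  set U : Matrix (Fin d) (Fin d) ℝ := (hA.eigenvectorUnitary : Matrix (Fin d) (Fin d) ℝ) with hU
  have hUmem : U * star U = 1 := (Matrix.mem_unitaryGroup_iff).mp hA.eigenvectorUnitary.2
  set w : Fin d → ℝ := star U *ᵥ v with hw
  have hvU : v ᵥ* U = w := by
    rw [hw, Matrix.star_eq_conjTranspose, ← Matrix.mulVec_transpose,
      Matrix.conjTranspose_eq_transpose_of_trivial]
  have hww : w ⬝ᵥ w = v ⬝ᵥ v := by
    calc w ⬝ᵥ w = (w ᵥ* star U) ⬝ᵥ v := by rw [hw, Matrix.dotProduct_mulVec]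
      _ = (U *ᵥ w) ⬝ᵥ v := by
          congr 1
          rw [Matrix.star_eq_conjTranspose]
          ext i
          simp [Matrix.vecMul, Matrix.mulVec, Matrix.conjTranspose_apply, dotProduct,
            mul_comm]
      _ = v ⬝ᵥ v := by
          rw [hw, Matrix.mulVec_mulVec, hUmem, Matrix.one_mulVec]
  have hquad : v ⬝ᵥ A *ᵥ v = ∑ i, hA.eigenvalues i * (w i * w i) := by
    conv_lhs => rw [hA.spectral_theorem, Unitary.conjStarAlgAut_apply]
    rw [← Matrix.mulVec_mulVec, ← Matrix.mulVec_mulVec, Matrix.dotProduct_mulVec, hvU]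
    rw [dotProduct]
    refine Finset.sum_congr rfl fun i _ => ?_
    rw [Matrix.mulVec_diagonal]
    show w i * (hA.eigenvalues i * w i) = _
    ring
  constructor
  · rw [hquad, ← hww, dotProduct, Finset.mul_sum]
    refine Finset.sum_le_sum fun i _ => ?_
    have h1 : lamMin A ≤ hA.eigenvalues i := by
      rw [lamMin, dif_pos hA]
      exact ciInf_le (Set.finite_range _).bddBelow i
    exact mul_le_mul_of_nonneg_right h1 (mul_self_nonneg _)
  · rw [hquad, ← hww, dotProduct, Finset.mul_sum]
    refine Finset.sum_le_sum fun i _ => ?_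
    have h1 : hA.eigenvalues i ≤ lamMax A := by
      rw [lamMax, dif_pos hA]
      exact le_ciSup (Set.finite_range _).bddAbove i
    exact mul_le_mul_of_nonneg_right h1 (mul_self_nonneg _)

lemma cs_sq' {n : ℕ} (v w : Fin n → ℝ) : (v ⬝ᵥ w) ^ 2 ≤ (v ⬝ᵥ v) * (w ⬝ᵥ w) := by
  simpa [dotProduct, sq] using Finset.sum_mul_sq_le_sq_mul_sq Finset.univ v w

lemma inv_mulVec_bound {d : ℕ} (A : Matrix (Fin d) (Fin d) ℝ) (hA : A.PosDef)
    (hm : 0 < lamMin A) (q : Fin d → ℝ) :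
    norm2 (A⁻¹ *ᵥ q) ≤ (1 / lamMin A) * norm2 q := by
  set z := A⁻¹ *ᵥ q with hz
  have hAz : A *ᵥ z = q := by
    rw [hz, Matrix.mulVec_mulVec, Matrix.mul_nonsing_inv _ (isUnit_iff_ne_zero.2 hA.det_pos.ne'),
      Matrix.one_mulVec]
  have h1 : lamMin A * (z ⬝ᵥ z) ≤ z ⬝ᵥ q := by
    have h := (rayleigh' A hA.1 z).1
    rwa [hAz] at h
  have h2 : z ⬝ᵥ q ≤ norm2 z * norm2 q := cs' z q
  have h3 : lamMin A * (norm2 z ^ 2) ≤ norm2 z * norm2 q := by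
    rw [sq_norm2']; linarith
  have h4 : lamMin A * norm2 z ≤ norm2 q := by
    rcases eq_or_lt_of_le (norm2_nonneg' z) with h0 | h0
    · rw [← h0, mul_zero]; exact norm2_nonneg' q
    · nlinarith
  calc norm2 z = (1 / lamMin A) * (lamMin A * norm2 z) := by field_simp
    _ ≤ (1 / lamMin A) * norm2 q :=
        mul_le_mul_of_nonneg_left h4 (by positivity)

lemma mulVec_X_bound {d n : ℕ} (X : Matrix (Fin d) (Fin n) ℝ) (hA : (X * Xᵀ).IsHermitian)
    (hM : 0 ≤ lamMax (X * Xᵀ)) (u : Fin n → ℝ) :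
    norm2 (X *ᵥ u) ≤ Real.sqrt (lamMax (X * Xᵀ)) * norm2 u := by
  set q := X *ᵥ u with hq
  set r := Xᵀ *ᵥ q with hr
  have f1 : q ⬝ᵥ q = r ⬝ᵥ u := by
    conv_lhs => rw [hq]
    rw [Matrix.dotProduct_mulVec, ← Matrix.mulVec_transpose]
  have f2 : r ⬝ᵥ r = q ⬝ᵥ ((X * Xᵀ) *ᵥ q) := by
    conv_lhs => rw [hr]
    rw [Matrix.dotProduct_mulVec, Matrix.vecMul_transpose]
    rw [Matrix.mulVec_mulVec, dotProduct_comm]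
  have ray := (rayleigh' _ hA q).2
  have hcs : (r ⬝ᵥ u) ^ 2 ≤ (r ⬝ᵥ r) * (u ⬝ᵥ u) := cs_sq' r u
  have key : q ⬝ᵥ q ≤ lamMax (X * Xᵀ) * (u ⬝ᵥ u) := by
    rcases eq_or_lt_of_le (dot_nonneg' q) with h0 | h0
    · rw [← h0]; exact mul_nonneg hM (dot_nonneg' u)
    · nlinarith [dot_nonneg' u]
  calc norm2 q = Real.sqrt (q ⬝ᵥ q) := norm2_eq' q
    _ ≤ Real.sqrt (lamMax (X * Xᵀ) * (u ⬝ᵥ u)) := Real.sqrt_le_sqrt key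
    _ = Real.sqrt (lamMax (X * Xᵀ)) * norm2 u := by
        rw [Real.sqrt_mul hM, norm2_eq']

theorem stmt6 {d n : ℕ} (X : Matrix (Fin d) (Fin n) ℝ) (hX : (X * Xᵀ).PosDef)
    (wstar : Fin d → ℝ) (bstar ε : Fin n → ℝ)
    (y : Fin n → ℝ) (hy : y = Xᵀ.mulVec wstar + bstar + ε)
    (b : Fin n → ℝ) (w' : Fin d → ℝ)
    (hw' : w' = (X * Xᵀ)⁻¹.mulVec (X.mulVec (y - b))) :
    ∀ btil : Fin n → ℝ,
      norm2 (w' - wstar)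
        ≤ (1 / lamMin (X * Xᵀ)) * norm2 (X.mulVec (ε + bstar - btil))
          + (Real.sqrt (lamMax (X * Xᵀ)) / lamMin (X * Xᵀ)) * norm2 (btil - b) := by
  intro btil
  by_cases hd : d = 0
  · subst hd
    have hL : norm2 (w' - wstar) = 0 := by simp [norm2]
    have hmin : lamMin (X * Xᵀ) = 0 := by
      rw [lamMin, dif_pos hX.1]
      exact Real.iInf_of_isEmpty _
    rw [hL, hmin]
    simp [div_zero]
  haveI : Nonempty (Fin d) := ⟨⟨0, Nat.pos_of_ne_zero hd⟩⟩
  have hA := hX.1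
  have hm : 0 < lamMin (X * Xᵀ) := by
    rw [lamMin, dif_pos hA]
    obtain ⟨i, hi⟩ := exists_eq_ciInf_of_finite (f := hA.eigenvalues)
    rw [← hi]
    exact hX.eigenvalues_pos i
  have hmM : lamMin (X * Xᵀ) ≤ lamMax (X * Xᵀ) := by
    rw [lamMin, lamMax, dif_pos hA, dif_pos hA]
    have i := Classical.arbitrary (Fin d)
    exact le_trans (ciInf_le (Set.finite_range _).bddBelow i)
      (le_ciSup (Set.finite_range _).bddAbove i)
  have hM0 : 0 ≤ lamMax (X * Xᵀ) := le_trans hm.le hmM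
  have key : w' - wstar
      = (X * Xᵀ)⁻¹ *ᵥ (X *ᵥ (ε + bstar - btil)) + (X * Xᵀ)⁻¹ *ᵥ (X *ᵥ (btil - b)) := by
    have hsplit : y - b = Xᵀ *ᵥ wstar + ((ε + bstar - btil) + (btil - b)) := by
      rw [hy]; funext i; simp only [Pi.add_apply, Pi.sub_apply]; ring
    rw [hw', hsplit, Matrix.mulVec_add, Matrix.mulVec_mulVec, Matrix.mulVec_add,
      Matrix.mulVec_mulVec, Matrix.nonsing_inv_mul _ (isUnit_iff_ne_zero.2 hX.det_pos.ne'),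
      Matrix.one_mulVec, Matrix.mulVec_add, Matrix.mulVec_add]
    abel
  have t1 : norm2 ((X * Xᵀ)⁻¹ *ᵥ (X *ᵥ (ε + bstar - btil)))
      ≤ (1 / lamMin (X * Xᵀ)) * norm2 (X *ᵥ (ε + bstar - btil)) :=
    inv_mulVec_bound _ hX hm _
  have t2 : norm2 ((X * Xᵀ)⁻¹ *ᵥ (X *ᵥ (btil - b)))
      ≤ (Real.sqrt (lamMax (X * Xᵀ)) / lamMin (X * Xᵀ)) * norm2 (btil - b) := by
    calc norm2 ((X * Xᵀ)⁻¹ *ᵥ (X *ᵥ (btil - b)))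
        ≤ (1 / lamMin (X * Xᵀ)) * norm2 (X *ᵥ (btil - b)) := inv_mulVec_bound _ hX hm _
      _ ≤ (1 / lamMin (X * Xᵀ)) * (Real.sqrt (lamMax (X * Xᵀ)) * norm2 (btil - b)) :=
          mul_le_mul_of_nonneg_left (mulVec_X_bound X hA hM0 _) (by positivity)
      _ = (Real.sqrt (lamMax (X * Xᵀ)) / lamMin (X * Xᵀ)) * norm2 (btil - b) := by ring
  calc norm2 (w' - wstar)
      ≤ norm2 ((X * Xᵀ)⁻¹ *ᵥ (X *ᵥ (ε + bstar - btil)))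
        + norm2 ((X * Xᵀ)⁻¹ *ᵥ (X *ᵥ (btil - b))) := by
        rw [key]; exact norm2_triangle _ _
    _ ≤ _ := add_le_add t1 t2
end

section
/- Let X ∈ ℝ^{d×n}, let M be a symmetric positive semidefinite d×d matrix with XX^T + M positive definite, and suppose X satisfies the SSS property at level m with constant Λ_m. Then for every u ∈ ℝ^d and every S ⊆ {1,…,n} with |S| = m, ‖(X^T (XX^T + M)^{-1} M u)_S‖₂ ≤ (√Λ_m · λ_max(M) / λ_min(XX^T + M)) · ‖u‖₂. -/
open Matrix

/-!
Put `v = (XXᵀ + M)⁻¹ M u`, so that the vector in question is `Xᵀ v` and `(XXᵀ + M) v = M u`.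
Its restriction to `S` has squared norm `vᵀ X_S X_Sᵀ v ≤ Λ ‖v‖²`, while
`λ_min(XXᵀ + M) ‖v‖ ≤ ‖(XXᵀ + M) v‖ = ‖M u‖ ≤ λ_max(M) ‖u‖`.
The norm bounds for `‖A w‖` with `A` symmetric are the Loewner-order bounds on the quadratic
form of `A ^ 2`, whose spectrum consists of the squares of the eigenvalues of `A`.
-/

open scoped MatrixOrder

namespace Matrix.IsHermitian

variable {n : Type*} [Fintype n] [DecidableEq n] {A : Matrix n n ℝ}

lemma mulVec_dotProduct_mulVec (hA : A.IsHermitian) (v : n → ℝ) :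
    (A *ᵥ v) ⬝ᵥ (A *ᵥ v) = v ⬝ᵥ (A ^ 2) *ᵥ v := by
  have hAt : Aᵀ = A := by rw [← conjTranspose_eq_transpose_of_trivial, hA.eq]
  rw [pow_two, ← mulVec_mulVec, dotProduct_mulVec v, ← vecMul_transpose, hAt]

lemma dotProduct_mulVec_le (hA : A.IsHermitian) {c : ℝ} (h : ∀ x ∈ spectrum ℝ A, x ≤ c)
    (v : n → ℝ) : v ⬝ᵥ (A *ᵥ v) ≤ c * (v ⬝ᵥ v) := by
  have hle : A ≤ algebraMap ℝ _ c := le_algebraMap_of_spectrum_le h hA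
  simpa only [Algebra.algebraMap_eq_smul_one, sub_mulVec, smul_mulVec, one_mulVec,
    dotProduct_sub, dotProduct_smul, star_trivial, smul_eq_mul, sub_nonneg] using
    (Matrix.le_iff.mp hle).dotProduct_mulVec_nonneg v

lemma le_dotProduct_mulVec (hA : A.IsHermitian) {c : ℝ} (h : ∀ x ∈ spectrum ℝ A, c ≤ x)
    (v : n → ℝ) : c * (v ⬝ᵥ v) ≤ v ⬝ᵥ (A *ᵥ v) := by
  have hle : algebraMap ℝ _ c ≤ A := algebraMap_le_of_le_spectrum h hA
  simpa only [Algebra.algebraMap_eq_smul_one, sub_mulVec, smul_mulVec, one_mulVec,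
    dotProduct_sub, dotProduct_smul, star_trivial, smul_eq_mul, sub_nonneg] using
    (Matrix.le_iff.mp hle).dotProduct_mulVec_nonneg v

lemma spectrum_sq (hA : A.IsHermitian) : spectrum ℝ (A ^ 2) = (· ^ 2) '' spectrum ℝ A := by
  rw [← cfc_pow_id (R := ℝ) A 2 hA.isSelfAdjoint,
    cfc_map_spectrum (fun x : ℝ => x ^ 2) A hA.isSelfAdjoint]

lemma mulVec_dotProduct_mulVec_le (hA : A.IsHermitian) {c : ℝ}
    (h : ∀ x ∈ spectrum ℝ A, |x| ≤ c) (v : n → ℝ) :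
    (A *ᵥ v) ⬝ᵥ (A *ᵥ v) ≤ c ^ 2 * (v ⬝ᵥ v) := by
  rw [hA.mulVec_dotProduct_mulVec]
  refine (hA.pow 2).dotProduct_mulVec_le ?_ v
  rw [hA.spectrum_sq]
  rintro _ ⟨x, hx, rfl⟩
  exact sq_le_sq.mpr ((h x hx).trans (le_abs_self c))

lemma le_mulVec_dotProduct_mulVec (hA : A.IsHermitian) {c : ℝ} (hc : 0 ≤ c)
    (h : ∀ x ∈ spectrum ℝ A, c ≤ |x|) (v : n → ℝ) :
    c ^ 2 * (v ⬝ᵥ v) ≤ (A *ᵥ v) ⬝ᵥ (A *ᵥ v) := by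
  rw [hA.mulVec_dotProduct_mulVec]
  refine (hA.pow 2).le_dotProduct_mulVec ?_ v
  rw [hA.spectrum_sq]
  rintro _ ⟨x, hx, rfl⟩
  exact sq_le_sq.mpr ((abs_of_nonneg hc).trans_le (h x hx))

end Matrix.IsHermitian

section Extremal

variable {d : ℕ} {A : Matrix (Fin d) (Fin d) ℝ}

lemma le_lamMax (hA : A.IsHermitian) : ∀ x ∈ spectrum ℝ A, x ≤ lamMax A := by
  rw [hA.spectrum_real_eq_range_eigenvalues]
  rintro _ ⟨i, rfl⟩
  rw [lamMax, dif_pos hA]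
  exact le_ciSup (Set.finite_range _).bddAbove i

lemma lamMin_le (hA : A.IsHermitian) : ∀ x ∈ spectrum ℝ A, lamMin A ≤ x := by
  rw [hA.spectrum_real_eq_range_eigenvalues]
  rintro _ ⟨i, rfl⟩
  rw [lamMin, dif_pos hA]
  exact ciInf_le (Set.finite_range _).bddBelow i

lemma lamMax_nonneg [Nonempty (Fin d)] (hA : A.PosSemidef) : 0 ≤ lamMax A := by
  inhabit Fin d
  exact (hA.eigenvalues_nonneg default).trans <|
    le_lamMax hA.isHermitian _ (hA.isHermitian.eigenvalues_mem_spectrum_real default)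

lemma lamMin_pos [Nonempty (Fin d)] (hA : A.PosDef) : 0 < lamMin A := by
  obtain ⟨i, hi⟩ := exists_eq_ciInf_of_finite (f := hA.isHermitian.eigenvalues)
  rw [lamMin, dif_pos hA.isHermitian, ← hi]
  exact hA.eigenvalues_pos i

lemma dotProduct_mulVec_le_lamMax (hA : A.IsHermitian) (v : Fin d → ℝ) :
    v ⬝ᵥ (A *ᵥ v) ≤ lamMax A * (v ⬝ᵥ v) :=
  hA.dotProduct_mulVec_le (le_lamMax hA) v

lemma mulVec_dotProduct_mulVec_le_lamMax (hA : A.PosSemidef) (v : Fin d → ℝ) :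
    (A *ᵥ v) ⬝ᵥ (A *ᵥ v) ≤ lamMax A ^ 2 * (v ⬝ᵥ v) :=
  hA.isHermitian.mulVec_dotProduct_mulVec_le (fun x hx =>
    (abs_of_nonneg (spectrum_nonneg_of_nonneg (nonneg_iff_posSemidef.mpr hA) hx)).trans_le
      (le_lamMax hA.isHermitian x hx)) v

lemma lamMin_sq_mul_le_mulVec_dotProduct_mulVec [Nonempty (Fin d)] (hA : A.PosDef)
    (v : Fin d → ℝ) : lamMin A ^ 2 * (v ⬝ᵥ v) ≤ (A *ᵥ v) ⬝ᵥ (A *ᵥ v) :=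
  hA.isHermitian.le_mulVec_dotProduct_mulVec (lamMin_pos hA).le
    (fun x hx => (lamMin_le hA.isHermitian x hx).trans (le_abs_self x)) v

end Extremal

lemma dotProduct_gramOn_mulVec {d n : ℕ} (X : Matrix (Fin d) (Fin n) ℝ) (S : Finset (Fin n))
    (v : Fin d → ℝ) :
    v ⬝ᵥ (gramOn X S *ᵥ v) = restrict S (Xᵀ *ᵥ v) ⬝ᵥ restrict S (Xᵀ *ᵥ v) := by
  have hr : ∀ w : Fin n → ℝ, restrict S w ⬝ᵥ restrict S w = ∑ i ∈ S, w i * w i := by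
    intro w
    simp only [dotProduct, restrict, ite_mul, mul_ite, mul_zero, zero_mul,
      Finset.sum_ite_mem, Finset.univ_inter, Finset.inter_self]
  rw [hr]
  simp only [dotProduct, mulVec, gramOn, transpose_apply, Finset.mul_sum, Finset.sum_mul]
  refine ((Finset.sum_congr rfl fun a _ => Finset.sum_comm).trans Finset.sum_comm).trans ?_
  exact Finset.sum_congr rfl fun i _ => Finset.sum_congr rfl fun a _ =>
    Finset.sum_congr rfl fun b _ => by ring

lemma posSemidef_gramOn {d n : ℕ} (X : Matrix (Fin d) (Fin n) ℝ) (S : Finset (Fin n)) :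
    (gramOn X S).PosSemidef := by
  refine .of_dotProduct_mulVec_nonneg ?_ fun v => ?_
  · ext a b
    simp only [conjTranspose_apply, gramOn, star_trivial, mul_comm]
  · rw [star_trivial, dotProduct_gramOn_mulVec]
    exact dotProduct_self_star_nonneg _

lemma norm2_eq_sqrt_dotProduct {n : ℕ} (v : Fin n → ℝ) : norm2 v = √(v ⬝ᵥ v) := by
  simp only [norm2, dotProduct, sq]

theorem stmt7 {d n : ℕ} (m : ℕ) (X : Matrix (Fin d) (Fin n) ℝ)
    (M : Matrix (Fin d) (Fin d) ℝ) (hM : M.PosSemidef) (hXM : (X * Xᵀ + M).PosDef)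
    (Λ : ℝ) (hSSS : ∀ S : Finset (Fin n), S.card = m → lamMax (gramOn X S) ≤ Λ) :
    ∀ (u : Fin d → ℝ) (S : Finset (Fin n)), S.card = m →
      norm2 (restrict S ((Xᵀ * (X * Xᵀ + M)⁻¹ * M).mulVec u))
        ≤ Real.sqrt Λ * lamMax M / lamMin (X * Xᵀ + M) * norm2 u := by
  intro u S hS
  rcases isEmpty_or_nonempty (Fin d) with _ | _
  · simp [Subsingleton.elim u 0, norm2, restrict]
  set A := X * Xᵀ + M
  set v := A⁻¹ *ᵥ (M *ᵥ u)
  have hAv : A *ᵥ v = M *ᵥ u := by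
    rw [mulVec_mulVec, mul_nonsing_inv A ((isUnit_iff_isUnit_det A).mp hXM.isUnit), one_mulVec]
  have hΛ : 0 ≤ Λ := (lamMax_nonneg (posSemidef_gramOn X S)).trans (hSSS S hS)
  have hμ : 0 < lamMin A := lamMin_pos hXM
  have hrestrict : restrict S (Xᵀ *ᵥ v) ⬝ᵥ restrict S (Xᵀ *ᵥ v) ≤ Λ * (v ⬝ᵥ v) := by
    rw [← dotProduct_gramOn_mulVec]
    exact (dotProduct_mulVec_le_lamMax (posSemidef_gramOn X S).isHermitian v).trans
      (mul_le_mul_of_nonneg_right (hSSS S hS) (dotProduct_self_star_nonneg v))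
  have hv : lamMin A ^ 2 * (v ⬝ᵥ v) ≤ lamMax M ^ 2 * (u ⬝ᵥ u) := by
    have hAv_lower := lamMin_sq_mul_le_mulVec_dotProduct_mulVec hXM v
    rw [hAv] at hAv_lower
    exact hAv_lower.trans (mulVec_dotProduct_mulVec_le_lamMax hM u)
  rw [← mulVec_mulVec, ← mulVec_mulVec, norm2_eq_sqrt_dotProduct, norm2_eq_sqrt_dotProduct,
    Real.sqrt_le_left (by have := lamMax_nonneg hM; positivity)]
  calc restrict S (Xᵀ *ᵥ v) ⬝ᵥ restrict S (Xᵀ *ᵥ v)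
      ≤ Λ * (lamMax M ^ 2 * (u ⬝ᵥ u) / lamMin A ^ 2) :=
        hrestrict.trans (mul_le_mul_of_nonneg_left ((le_div_iff₀' (by positivity)).mpr hv) hΛ)
    _ = (√Λ * lamMax M / lamMin A * √(u ⬝ᵥ u)) ^ 2 := by
        rw [mul_pow, div_pow, mul_pow, Real.sq_sqrt hΛ,
          Real.sq_sqrt (x := u ⬝ᵥ u) (dotProduct_self_star_nonneg u)]
        ring
end
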